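/- arXiv:1406.4765 — 2 statements merged into one kernel-verified Lean document; each statement's English description precedes it below -/
import Mathlib

section
/- Let z be as above with independent standardized components and |κ_i| = max_j |κ_j| attained at a unique index i. If u is a unit vector with |E((u'z)^4) - 3| = max_j |κ_j| and κ_i ≠ 0, then u = ± e_i for an index i attaining the maximum, i.e., u_j^4 = 0 for all j with |κ_j| < max or u is a standard basis vector up to sign. -/
open MeasureTheory ProbabilityTheory
open scoped ENNReal

/-! For centered independent `X, Y` the odd mixed moments vanish, so
`E(X+Y)^4 = EX^4 + 6 EX^2 EY^2 + EY^4` and `E(X+Y)^2 = EX^2 + EY^2`: the fourth cumulant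
`EX^4 - 3 (EX^2)^2` is additive over independent centered summands and scales like `c^4`.
Hence `E(u'z)^4 - 3 = ∑ u_j^4 κ_j` for a unit vector `u`, and
`|∑ u_j^4 κ_j| ≤ ∑ u_j^4 |κ_j| ≤ |κ_i| ∑ u_j^4 ≤ |κ_i|`; equality forces `u_j = 0` whenever
`|κ_j| < |κ_i|`. -/

namespace ProbabilityTheory

variable {Ω : Type*} {mΩ : MeasurableSpace Ω} {μ : Measure Ω}

/-- Agrees with the fourth cumulant only when `X` is centered. -/
noncomputable def fourthCumulant (X : Ω → ℝ) (μ : Measure Ω) : ℝ :=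
  ∫ ω, X ω ^ 4 ∂μ - 3 * (∫ ω, X ω ^ 2 ∂μ) ^ 2

theorem fourthCumulant_const_mul (c : ℝ) (X : Ω → ℝ) :
    fourthCumulant (fun ω => c * X ω) μ = c ^ 4 * fourthCumulant X μ := by
  simp only [fourthCumulant, mul_pow, integral_const_mul]
  ring

section FiniteMeasure

variable [IsFiniteMeasure μ]

theorem _root_.MeasureTheory.MemLp.integrable_pow {f : Ω → ℝ} {p : ℝ≥0∞}
    {n : ℕ} (hf : MemLp f p μ) (hn : (n : ℝ≥0∞) ≤ p) : Integrable (fun ω => f ω ^ n) μ := by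
  have hmeas : AEStronglyMeasurable (fun ω => f ω ^ n) μ := hf.aestronglyMeasurable.pow n
  refine (integrable_norm_iff hmeas).1 ?_
  simpa only [norm_pow] using (hf.mono_exponent hn).integrable_norm_pow'

theorem IndepFun.integral_add_pow {X Y : Ω → ℝ} {n : ℕ} (hXY : IndepFun X Y μ)
    (hX : MemLp X n μ) (hY : MemLp Y n μ) :
    ∫ ω, (X ω + Y ω) ^ n ∂μ =
      ∑ k ∈ Finset.range (n + 1), (∫ ω, X ω ^ k ∂μ) * (∫ ω, Y ω ^ (n - k) ∂μ) * n.choose k := by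
  have hpow (k : ℕ) : IndepFun (fun ω => X ω ^ k) (fun ω => Y ω ^ (n - k)) μ :=
    hXY.comp (measurable_id.pow_const k) (measurable_id.pow_const (n - k))
  have hXk {k : ℕ} (hk : k ∈ Finset.range (n + 1)) : Integrable (fun ω => X ω ^ k) μ :=
    hX.integrable_pow (mod_cast Finset.mem_range_succ_iff.1 hk)
  have hYk (k : ℕ) : Integrable (fun ω => Y ω ^ (n - k)) μ :=
    hY.integrable_pow (mod_cast Nat.sub_le n k)
  simp_rw [add_pow]
  rw [integral_finsetSum _ fun k hk => ?integrable]
  case integrable => exact ((hpow k).integrable_mul (hXk hk) (hYk k)).mul_const _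
  refine Finset.sum_congr rfl fun k hk => ?_
  rw [integral_mul_const]
  congr 1
  exact (hpow k).integral_mul_eq_mul_integral (hXk hk).aestronglyMeasurable
    (hYk k).aestronglyMeasurable

theorem iIndepFun.map_finsetSum {ι : Type*} {F : (Ω → ℝ) → ℝ} (hF0 : F 0 = 0)
    (hF_add : ∀ X Y : Ω → ℝ, IndepFun X Y μ → MemLp X 4 μ → MemLp Y 4 μ →
      ∫ ω, X ω ∂μ = 0 → ∫ ω, Y ω ∂μ = 0 → F (X + Y) = F X + F Y)
    {X : ι → Ω → ℝ} (hindep : iIndepFun X μ) (hL4 : ∀ j, MemLp (X j) 4 μ)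
    (hmean : ∀ j, ∫ ω, X j ω ∂μ = 0) (s : Finset ι) :
    F (∑ j ∈ s, X j) = ∑ j ∈ s, F (X j) := by
  classical
  induction s using Finset.induction_on with
  | empty => simpa using hF0
  | insert k s hk ih =>
    have hS : MemLp (∑ j ∈ s, X j) 4 μ := memLp_finsetSum' s fun j _ => hL4 j
    have hS0 : ∫ ω, (∑ j ∈ s, X j) ω ∂μ = 0 := by
      simp only [Finset.sum_apply]
      rw [integral_finsetSum s fun j _ => (hL4 j).integrable (by norm_num)]
      simp [hmean]
    have hind : IndepFun (∑ j ∈ s, X j) (X k) μ :=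
      hindep.indepFun_finsetSum_of_notMem₀ (fun j => (hL4 j).aestronglyMeasurable.aemeasurable) hk
    rw [Finset.sum_insert hk, Finset.sum_insert hk, add_comm (X k),
      hF_add _ _ hind hS (hL4 k) hS0 (hmean k), ih, add_comm]

end FiniteMeasure

section ProbabilityMeasure

variable [IsProbabilityMeasure μ]

theorem IndepFun.integral_add_sq {X Y : Ω → ℝ} (hXY : IndepFun X Y μ) (hX : MemLp X 2 μ)
    (hY : MemLp Y 2 μ) (hX0 : ∫ ω, X ω ∂μ = 0) (hY0 : ∫ ω, Y ω ∂μ = 0) :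
    ∫ ω, (X ω + Y ω) ^ 2 ∂μ = ∫ ω, X ω ^ 2 ∂μ + ∫ ω, Y ω ^ 2 ∂μ := by
  rw [hXY.integral_add_pow (mod_cast hX) (mod_cast hY)]
  simp [Finset.sum_range_succ, hX0, hY0, add_comm]

theorem IndepFun.integral_add_pow_four {X Y : Ω → ℝ} (hXY : IndepFun X Y μ) (hX : MemLp X 4 μ)
    (hY : MemLp Y 4 μ) (hX0 : ∫ ω, X ω ∂μ = 0) (hY0 : ∫ ω, Y ω ∂μ = 0) :
    ∫ ω, (X ω + Y ω) ^ 4 ∂μ =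
      ∫ ω, X ω ^ 4 ∂μ + 6 * (∫ ω, X ω ^ 2 ∂μ) * (∫ ω, Y ω ^ 2 ∂μ) + ∫ ω, Y ω ^ 4 ∂μ := by
  rw [hXY.integral_add_pow (mod_cast hX) (mod_cast hY)]
  simp [Finset.sum_range_succ, hX0, hY0, Nat.choose]
  ring

theorem IndepFun.fourthCumulant_add {X Y : Ω → ℝ} (hXY : IndepFun X Y μ) (hX : MemLp X 4 μ)
    (hY : MemLp Y 4 μ) (hX0 : ∫ ω, X ω ∂μ = 0) (hY0 : ∫ ω, Y ω ∂μ = 0) :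
    fourthCumulant (X + Y) μ = fourthCumulant X μ + fourthCumulant Y μ := by
  have h24 : (2 : ℝ≥0∞) ≤ 4 := by norm_num
  simp only [fourthCumulant, Pi.add_apply, hXY.integral_add_pow_four hX hY hX0 hY0,
    hXY.integral_add_sq (hX.mono_exponent h24) (hY.mono_exponent h24) hX0 hY0]
  ring

theorem iIndepFun.integral_finsetSum_sq {ι : Type*} {X : ι → Ω → ℝ} (hindep : iIndepFun X μ)
    (hL4 : ∀ j, MemLp (X j) 4 μ) (hmean : ∀ j, ∫ ω, X j ω ∂μ = 0) (s : Finset ι) :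
    ∫ ω, (∑ j ∈ s, X j ω) ^ 2 ∂μ = ∑ j ∈ s, ∫ ω, X j ω ^ 2 ∂μ := by
  have h24 : (2 : ℝ≥0∞) ≤ 4 := by norm_num
  simpa only [Finset.sum_apply] using hindep.map_finsetSum (F := fun Y => ∫ ω, Y ω ^ 2 ∂μ)
    (by simp) (fun _ _ hXY hX hY hX0 hY0 =>
      hXY.integral_add_sq (hX.mono_exponent h24) (hY.mono_exponent h24) hX0 hY0) hL4 hmean s

theorem iIndepFun.fourthCumulant_finsetSum {ι : Type*} {X : ι → Ω → ℝ}
    (hindep : iIndepFun X μ) (hL4 : ∀ j, MemLp (X j) 4 μ) (hmean : ∀ j, ∫ ω, X j ω ∂μ = 0)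
    (s : Finset ι) :
    fourthCumulant (∑ j ∈ s, X j) μ = ∑ j ∈ s, fourthCumulant (X j) μ :=
  hindep.map_finsetSum (F := (fourthCumulant · μ)) (by simp [fourthCumulant])
    (fun _ _ hXY hX hY hX0 hY0 => hXY.fourthCumulant_add hX hY hX0 hY0) hL4 hmean s

end ProbabilityMeasure

end ProbabilityTheory

theorem eq_zero_of_abs_sum_pow_four_mul_eq {ι : Type*} [Fintype ι] {u κ : ι → ℝ} {i : ι}
    (hu : ∑ j, u j ^ 2 = 1) (hmax : ∀ j, j ≠ i → |κ j| < |κ i|)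
    (heq : |∑ j, u j ^ 4 * κ j| = |κ i|) {j : ι} (hj : j ≠ i) : u j = 0 := by
  have hκ_le (k : ι) : |κ k| ≤ |κ i| := by
    rcases eq_or_ne k i with rfl | hk
    · exact le_rfl
    · exact (hmax k hk).le
  have hsum4 : ∑ k, u k ^ 4 ≤ 1 := by
    calc ∑ k, u k ^ 4 = ∑ k, (u k ^ 2) ^ 2 := Finset.sum_congr rfl fun k _ => by ring
      _ ≤ (∑ k, u k ^ 2) ^ 2 := Finset.sum_sq_le_sq_sum_of_nonneg fun k _ => sq_nonneg _
      _ = 1 := by rw [hu, one_pow]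
  have habs4 (k : ι) : |u k ^ 4| = u k ^ 4 := abs_of_nonneg (by positivity)
  have hslack : ∑ k, u k ^ 4 * (|κ i| - |κ k|) ≤ 0 := by
    calc ∑ k, u k ^ 4 * (|κ i| - |κ k|) = (∑ k, u k ^ 4) * |κ i| - ∑ k, |u k ^ 4 * κ k| := by
          simp only [mul_sub, abs_mul, habs4, Finset.sum_sub_distrib, Finset.sum_mul]
      _ ≤ |κ i| - |∑ k, u k ^ 4 * κ k| := by
          gcongr
          · exact mul_le_of_le_one_left (abs_nonneg _) hsum4
          · exact Finset.abs_sum_le_sum_abs _ _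
      _ = 0 := by rw [heq, sub_self]
  have hnonneg (k : ι) : 0 ≤ u k ^ 4 * (|κ i| - |κ k|) :=
    mul_nonneg (by positivity) (sub_nonneg.2 (hκ_le k))
  have hterm : u j ^ 4 * (|κ i| - |κ j|) = 0 :=
    (Finset.sum_eq_zero_iff_of_nonneg fun k _ => hnonneg k).1
      (hslack.antisymm (Finset.sum_nonneg fun k _ => hnonneg k)) j (Finset.mem_univ j)
  exact pow_eq_zero_iff (n := 4) (by norm_num) |>.1 <|
    (mul_eq_zero.1 hterm).resolve_right (sub_ne_zero.2 (hmax j hj).ne')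

theorem eq_one_or_eq_neg_one_of_abs_sum_pow_four_mul_eq {ι : Type*} [Fintype ι] {u κ : ι → ℝ}
    {i : ι} (hu : ∑ j, u j ^ 2 = 1) (hmax : ∀ j, j ≠ i → |κ j| < |κ i|)
    (heq : |∑ j, u j ^ 4 * κ j| = |κ i|) : u i = 1 ∨ u i = -1 := by
  rw [← sq_eq_one_iff, ← hu, Finset.sum_eq_single i]
  · intro j _ hj
    rw [eq_zero_of_abs_sum_pow_four_mul_eq hu hmax heq hj, zero_pow two_ne_zero]
  · exact fun hi => absurd (Finset.mem_univ i) hi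

theorem maximizer_is_signed_basis_vector_general
    {Ω : Type*} [MeasureSpace Ω] [IsProbabilityMeasure (ℙ : Measure Ω)]
    {p : ℕ} (z : Fin p → Ω → ℝ) (κ : Fin p → ℝ)
    (hindep : iIndepFun z ℙ)
    (hL4 : ∀ i, MemLp (z i) 4 ℙ)
    (hmean : ∀ i, ∫ ω, z i ω = 0)
    (hvar : ∀ i, ∫ ω, (z i ω) ^ 2 = 1)
    (hκ : ∀ i, κ i = (∫ ω, (z i ω) ^ 4) - 3)
    (i : Fin p)
    (hmax : ∀ j, j ≠ i → |κ j| < |κ i|)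
    (u : Fin p → ℝ) (hu : ∑ j, (u j) ^ 2 = 1)
    (heq : |(∫ ω, (∑ j, u j * z j ω) ^ 4) - 3| = |κ i|) :
    (∀ j, j ≠ i → u j = 0) ∧ (u i = 1 ∨ u i = -1) := by
  set X : Fin p → Ω → ℝ := fun j ω => u j * z j ω
  have hX : iIndepFun X ℙ := hindep.comp (fun j x => u j * x) fun j => measurable_const_mul (u j)
  have hXL4 (j : Fin p) : MemLp (X j) 4 ℙ := (hL4 j).const_mul (u j)
  have hXmean (j : Fin p) : ∫ ω, X j ω = 0 := by simp [X, integral_const_mul, hmean]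
  have hsq : ∫ ω, (∑ j, X j ω) ^ 2 = 1 := by
    simp [hX.integral_finsetSum_sq hXL4 hXmean, X, mul_pow, integral_const_mul, hvar, hu]
  have hcum : fourthCumulant (∑ j, X j) ℙ = ∑ j, u j ^ 4 * κ j := by
    rw [hX.fourthCumulant_finsetSum hXL4 hXmean]
    refine Finset.sum_congr rfl fun j _ => ?_
    rw [fourthCumulant_const_mul, fourthCumulant, hvar, hκ]
    ring
  have hkurt : (∫ ω, (∑ j, u j * z j ω) ^ 4) - 3 = ∑ j, u j ^ 4 * κ j := by
    rw [← hcum, fourthCumulant, Finset.sum_fn, hsq]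
    ring
  rw [hkurt] at heq
  exact ⟨fun j => eq_zero_of_abs_sum_pow_four_mul_eq hu hmax heq,
    eq_one_or_eq_neg_one_of_abs_sum_pow_four_mul_eq hu hmax heq⟩

/-- If the maximal absolute kurtosis is attained at a unique index `i` with `κ i ≠ 0`,
then a unit vector `u` achieving `|E((u'z)^4) - 3| = |κ i|` must be `± e_i`. -/
theorem maximizer_is_signed_basis_vector
    {Ω : Type*} [MeasureSpace Ω] [IsProbabilityMeasure (ℙ : Measure Ω)]
    {p : ℕ} (z : Fin p → Ω → ℝ) (κ : Fin p → ℝ)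
    (hmeas : ∀ i, Measurable (z i))
    (hindep : iIndepFun z ℙ)
    (hL4 : ∀ i, MemLp (z i) 4 ℙ)
    (hmean : ∀ i, ∫ ω, z i ω = 0)
    (hvar : ∀ i, ∫ ω, (z i ω) ^ 2 = 1)
    (hκ : ∀ i, κ i = (∫ ω, (z i ω) ^ 4) - 3)
    (i : Fin p) (hκi : κ i ≠ 0)
    (hmax : ∀ j, j ≠ i → |κ j| < |κ i|)
    (u : Fin p → ℝ) (hu : ∑ j, (u j) ^ 2 = 1)
    (heq : |(∫ ω, (∑ j, u j * z j ω) ^ 4) - 3| = |κ i|) :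
    (∀ j, j ≠ i → u j = 0) ∧ (u i = 1 ∨ u i = -1) :=
  maximizer_is_signed_basis_vector_general z κ hindep hL4 hmean hvar hκ i hmax u hu heq
end

section
/- Under the assumptions of the previous statement, the JADE criterion D(V) = Σ_{i,j} ‖diag(V C^{ij}(U'z) V')‖² over orthogonal V is maximized by V = PJU for any permutation matrix P and sign-change matrix J, and the maximum value equals Σ_{l=1}^p κ_l^2. -/
open MeasureTheory ProbabilityTheory Matrix

/-- The fourth cumulant matrix functional
`C(x, A) = E[(x'Ax) x x'] - A - A' - tr(A) I_p`. -/
noncomputable def cumulantMatrix {Ω : Type*} [MeasureSpace Ω] {p : ℕ}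
    (x : Ω → Fin p → ℝ) (A : Matrix (Fin p) (Fin p) ℝ) : Matrix (Fin p) (Fin p) ℝ :=
  (Matrix.of fun k l => ∫ ω, (x ω ⬝ᵥ A.mulVec (x ω)) * x ω k * x ω l)
    - A - Aᵀ - A.trace • (1 : Matrix (Fin p) (Fin p) ℝ)

/-!
Write `x = Uᵀ z`. The cumulant matrix is equivariant under orthogonal maps,
`C(O y, A) = O C(y, Oᵀ A O) Oᵀ`, and for independent standardized coordinates the fourth-moment
formula `E[z_a z_b z_c z_d] = δ_ab δ_cd + δ_ac δ_bd + δ_ad δ_bc + κ_a [a = b = c = d]` gives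
`C(z, B) = diag(κ_a B_aa)`. Hence `C(x, E^{ij}) = Uᵀ diag(κ_a U_ai U_aj) U`, and orthogonal
invariance of the Frobenius norm turns the criterion into `D(V) = ∑_k ∑_a W_ka⁴ κ_a²` with
`W = V Uᵀ` orthogonal. Each column of `W` is a unit vector, so `∑_k W_ka⁴ ≤ (∑_k W_ka²)² = 1`,
with equality when `W = P J` is a signed permutation.
-/

instance ENNReal.holderTriple_four_four_two : ENNReal.HolderTriple 4 4 2 where
  inv_add_inv_eq_inv := by
    have := ENNReal.add_halves (2 : ENNReal)⁻¹
    rwa [ENNReal.div_eq_inv_mul, ← ENNReal.mul_inv (by simp) (by simp),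
      show (2 : ENNReal) * 2 = 4 by norm_num] at this

lemma MeasureTheory.MemLp.integrable_mul_mul_mul {Ω : Type*} [MeasurableSpace Ω] {μ : Measure Ω}
    {f g h k : Ω → ℝ} (hf : MemLp f 4 μ) (hg : MemLp g 4 μ) (hh : MemLp h 4 μ)
    (hk : MemLp k 4 μ) : Integrable (fun ω => f ω * g ω * h ω * k ω) μ := by
  refine ((hg.mul' hf (r := 2)).integrable_mul (hk.mul' hh (r := 2))).congr
    (.of_forall fun ω => ?_)
  simp only [Pi.mul_apply, mul_assoc]

lemma four_indices_cases {ι : Type*} (a b c d : ι) :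
    (a = b ∧ a = c ∧ a = d) ∨
      (a ≠ b ∧ a ≠ c ∧ a ≠ d) ∨ (b ≠ a ∧ b ≠ c ∧ b ≠ d) ∨
      (c ≠ a ∧ c ≠ b ∧ c ≠ d) ∨ (d ≠ a ∧ d ≠ b ∧ d ≠ c) ∨
      (a = b ∧ c = d ∧ a ≠ c) ∨ (a = c ∧ b = d ∧ a ≠ b) ∨ (a = d ∧ b = c ∧ a ≠ b) := by
  grind

section MomentMatrix

variable {Ω n m : Type*} [MeasurableSpace Ω] {μ : Measure Ω} [Fintype n] [Fintype m]

noncomputable def fourthMomentMatrix (μ : Measure Ω) (x : Ω → n → ℝ) (A : Matrix n n ℝ) :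
    Matrix n n ℝ :=
  Matrix.of fun k l => ∫ ω, (x ω ⬝ᵥ A *ᵥ x ω) * x ω k * x ω l ∂μ

lemma dotProduct_mulVec_mul_mul (v : n → ℝ) (B : Matrix n n ℝ) (k l : n) :
    (v ⬝ᵥ B *ᵥ v) * v k * v l = ∑ a, ∑ b, B a b * (v a * v b * v k * v l) := by
  simp only [dotProduct, mulVec, Finset.sum_mul, Finset.mul_sum]
  exact Finset.sum_congr rfl fun a _ => Finset.sum_congr rfl fun b _ => by ring

variable {x : Ω → n → ℝ}
    (h4 : ∀ a b c d, Integrable (fun ω => x ω a * x ω b * x ω c * x ω d) μ)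
include h4

lemma integrable_dotProduct_mulVec_mul_mul (B : Matrix n n ℝ) (k l : n) :
    Integrable (fun ω => (x ω ⬝ᵥ B *ᵥ x ω) * x ω k * x ω l) μ := by
  simp only [dotProduct_mulVec_mul_mul]
  exact integrable_finsetSum _ fun a _ => integrable_finsetSum _ fun b _ =>
    (h4 a b k l).const_mul _

lemma fourthMomentMatrix_apply (B : Matrix n n ℝ) (k l : n) :
    fourthMomentMatrix μ x B k l = ∑ a, ∑ b, B a b * ∫ ω, x ω a * x ω b * x ω k * x ω l ∂μ := by
  simp only [fourthMomentMatrix, of_apply, dotProduct_mulVec_mul_mul]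
  rw [integral_finsetSum _ fun a _ =>
    integrable_finsetSum _ fun b _ => (h4 a b k l).const_mul (B a b)]
  refine Finset.sum_congr rfl fun a _ => ?_
  rw [integral_finsetSum _ fun b _ => (h4 a b k l).const_mul (B a b)]
  simp only [integral_const_mul]

lemma fourthMomentMatrix_mulVec (O : Matrix m n ℝ) (A : Matrix m m ℝ) :
    fourthMomentMatrix μ (fun ω => O *ᵥ x ω) A = O * fourthMomentMatrix μ x (Oᵀ * A * O) * Oᵀ := by
  ext k l
  have hquad (v : n → ℝ) : O *ᵥ v ⬝ᵥ A *ᵥ (O *ᵥ v) = v ⬝ᵥ (Oᵀ * A * O) *ᵥ v := by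
    rw [dotProduct_mulVec, dotProduct_mulVec v, ← vecMul_vecMul, ← vecMul_vecMul, vecMul_transpose,
      dotProduct_mulVec]
  have hexpand (ω : Ω) : (O *ᵥ x ω ⬝ᵥ A *ᵥ (O *ᵥ x ω)) * (O *ᵥ x ω) k * (O *ᵥ x ω) l =
      ∑ d, ∑ c, O k c * O l d * ((x ω ⬝ᵥ (Oᵀ * A * O) *ᵥ x ω) * x ω c * x ω d) := by
    rw [hquad]
    generalize x ω ⬝ᵥ (Oᵀ * A * O) *ᵥ x ω = q
    simp only [mulVec, dotProduct, Finset.mul_sum, Finset.sum_mul]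
    exact Finset.sum_congr rfl fun d _ => Finset.sum_congr rfl fun c _ => by ring
  have hint := integrable_dotProduct_mulVec_mul_mul h4 (Oᵀ * A * O)
  simp only [fourthMomentMatrix, of_apply, hexpand]
  rw [integral_finsetSum _ fun d _ => integrable_finsetSum _ fun c _ => (hint c d).const_mul _]
  simp only [mul_apply, Finset.sum_mul, transpose_apply, of_apply]
  refine Finset.sum_congr rfl fun d _ => ?_
  rw [integral_finsetSum _ fun c _ => (hint c d).const_mul _]
  simp only [integral_const_mul]
  exact Finset.sum_congr rfl fun c _ => by ring

end MomentMatrix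

lemma cumulantMatrix_eq_fourthMomentMatrix {Ω : Type*} [MeasureSpace Ω] {p : ℕ}
    (x : Ω → Fin p → ℝ) (A : Matrix (Fin p) (Fin p) ℝ) :
    cumulantMatrix x A = fourthMomentMatrix ℙ x A - A - Aᵀ - A.trace • 1 := rfl

lemma cumulantMatrix_mulVec {Ω : Type*} [MeasureSpace Ω] {p : ℕ} {O : Matrix (Fin p) (Fin p) ℝ}
    (hO : O * Oᵀ = 1) {y : Ω → Fin p → ℝ}
    (h4 : ∀ a b c d, Integrable (fun ω => y ω a * y ω b * y ω c * y ω d))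
    (A : Matrix (Fin p) (Fin p) ℝ) :
    cumulantMatrix (fun ω => O *ᵥ y ω) A = O * cumulantMatrix y (Oᵀ * A * O) * Oᵀ := by
  have hconj (M : Matrix (Fin p) (Fin p) ℝ) : O * (Oᵀ * M * O) * Oᵀ = M := by
    simp only [← Matrix.mul_assoc, hO, Matrix.one_mul]
    rw [Matrix.mul_assoc, hO, Matrix.mul_one]
  have htrace : (Oᵀ * A * O).trace = A.trace := by
    rw [trace_mul_comm, ← Matrix.mul_assoc, hO, Matrix.one_mul]
  have htranspose : Oᵀ * Aᵀ * O = (Oᵀ * A * O)ᵀ := by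
    simp only [transpose_mul, transpose_transpose, Matrix.mul_assoc]
  simp only [cumulantMatrix_eq_fourthMomentMatrix, fourthMomentMatrix_mulVec h4, Matrix.mul_sub,
    Matrix.sub_mul, Matrix.mul_smul, Matrix.smul_mul, Matrix.mul_one, hO, htrace, hconj,
    ← htranspose]

section Independent

variable {Ω ι : Type*} [MeasureSpace Ω] {z : ι → Ω → ℝ} {κ : ι → ℝ}

lemma ProbabilityTheory.iIndepFun.integral_mul_mul_mul_eq_zero [DecidableEq ι]
    (hindep : iIndepFun z ℙ) (hz : ∀ i, AEMeasurable (z i) ℙ) {a b c d : ι}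
    (hmean : ∫ ω, z a ω = 0) (hab : a ≠ b) (hac : a ≠ c) (had : a ≠ d) :
    ∫ ω, z a ω * z b ω * z c ω * z d ω = 0 := by
  have hdisj : Disjoint ({a} : Finset ι) {b, c, d} := by simp [hab, hac, had]
  have hb : b ∈ ({b, c, d} : Finset ι) := by simp
  have hc : c ∈ ({b, c, d} : Finset ι) := by simp
  have hd : d ∈ ({b, c, d} : Finset ι) := by simp
  have hφ : Measurable fun x : ({a} : Finset ι) → ℝ => x ⟨a, Finset.mem_singleton_self a⟩ :=
    measurable_pi_apply _
  have hψ : Measurable fun y : ({b, c, d} : Finset ι) → ℝ => y ⟨b, hb⟩ * y ⟨c, hc⟩ * y ⟨d, hd⟩ := by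
    fun_prop
  have hindep' := (hindep.indepFun_finset₀ _ _ hdisj hz).comp hφ hψ
  calc ∫ ω, z a ω * z b ω * z c ω * z d ω = ∫ ω, z a ω * (z b ω * z c ω * z d ω) := by
        simp only [mul_assoc]
    _ = (∫ ω, z a ω) * ∫ ω, z b ω * z c ω * z d ω :=
        hindep'.integral_fun_mul_eq_mul_integral (hz a).aestronglyMeasurable
          (((hz b).mul (hz c)).mul (hz d)).aestronglyMeasurable
    _ = 0 := by rw [hmean, zero_mul]

lemma ProbabilityTheory.iIndepFun.integral_mul_self_mul_mul_self (hindep : iIndepFun z ℙ)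
    (hz : ∀ i, AEMeasurable (z i) ℙ) {a c : ι} (hac : a ≠ c) :
    ∫ ω, z a ω * z a ω * z c ω * z c ω = (∫ ω, z a ω ^ 2) * ∫ ω, z c ω ^ 2 := by
  have hindep' := (hindep.indepFun hac).comp (φ := fun x : ℝ => x ^ 2) (ψ := fun x : ℝ => x ^ 2)
    (by fun_prop) (by fun_prop)
  calc ∫ ω, z a ω * z a ω * z c ω * z c ω = ∫ ω, z a ω ^ 2 * z c ω ^ 2 := by
        congr 1 with ω; ring
    _ = _ := hindep'.integral_fun_mul_eq_mul_integral ((hz a).pow_const 2).aestronglyMeasurable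
          ((hz c).pow_const 2).aestronglyMeasurable

lemma ProbabilityTheory.iIndepFun.integral_mul_mul_mul [DecidableEq ι] (hindep : iIndepFun z ℙ)
    (hz : ∀ i, AEMeasurable (z i) ℙ) (hmean : ∀ i, ∫ ω, z i ω = 0)
    (hvar : ∀ i, ∫ ω, z i ω ^ 2 = 1) (hκ : ∀ i, κ i = (∫ ω, z i ω ^ 4) - 3)
    (a b c d : ι) :
    ∫ ω, z a ω * z b ω * z c ω * z d ω =
      (if a = b then 1 else 0) * (if c = d then 1 else 0)
        + (if a = c then 1 else 0) * (if b = d then 1 else 0)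
        + (if a = d then 1 else 0) * (if b = c then 1 else 0)
        + if a = b ∧ a = c ∧ a = d then κ a else 0 := by
  have hzero {a b c d : ι} (hab : a ≠ b) (hac : a ≠ c) (had : a ≠ d) :=
    hindep.integral_mul_mul_mul_eq_zero hz (hmean a) hab hac had
  have hpair {a c : ι} (hac : a ≠ c) : ∫ ω, z a ω * z a ω * z c ω * z c ω = 1 := by
    rw [hindep.integral_mul_self_mul_mul_self hz hac, hvar, hvar, one_mul]
  rcases four_indices_cases a b c d with
    ⟨rfl, rfl, rfl⟩ | ⟨hab, hac, had⟩ | ⟨hba, hbc, hbd⟩ | ⟨hca, hcb, hcd⟩ | ⟨hda, hdb, hdc⟩ |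
      ⟨rfl, rfl, hac⟩ | ⟨rfl, rfl, hab⟩ | ⟨rfl, rfl, hab⟩
  · have hfourth : ∫ ω, z a ω * z a ω * z a ω * z a ω = ∫ ω, z a ω ^ 4 := by
      congr 1 with ω; ring
    simp only [hfourth, hκ, if_true, and_self]
    ring
  · simp [hzero hab hac had, hab, hac, had]
  · rw [show ∫ ω, z a ω * z b ω * z c ω * z d ω = ∫ ω, z b ω * z a ω * z c ω * z d ω by
      congr 1 with ω; ring, hzero hba hbc hbd]
    simp [hba.symm, hbc, hbd]
  · rw [show ∫ ω, z a ω * z b ω * z c ω * z d ω = ∫ ω, z c ω * z a ω * z b ω * z d ω by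
      congr 1 with ω; ring, hzero hca hcb hcd]
    simp [hca.symm, hcb.symm, hcd]
  · rw [show ∫ ω, z a ω * z b ω * z c ω * z d ω = ∫ ω, z d ω * z a ω * z b ω * z c ω by
      congr 1 with ω; ring, hzero hda hdb hdc]
    simp [hda.symm, hdb.symm, hdc.symm]
  · simp [hpair hac, hac]
  · rw [show ∫ ω, z a ω * z b ω * z a ω * z b ω = ∫ ω, z a ω * z a ω * z b ω * z b ω by
      congr 1 with ω; ring, hpair hab]
    simp [hab, hab.symm]
  · rw [show ∫ ω, z a ω * z b ω * z b ω * z a ω = ∫ ω, z a ω * z a ω * z b ω * z b ω by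
      congr 1 with ω; ring, hpair hab]
    simp [hab, hab.symm]

lemma ProbabilityTheory.iIndepFun.fourthMomentMatrix_eq [Fintype ι] [DecidableEq ι]
    (hindep : iIndepFun z ℙ) (hL4 : ∀ i, MemLp (z i) 4 ℙ) (hmean : ∀ i, ∫ ω, z i ω = 0)
    (hvar : ∀ i, ∫ ω, z i ω ^ 2 = 1) (hκ : ∀ i, κ i = (∫ ω, z i ω ^ 4) - 3)
    (B : Matrix ι ι ℝ) :
    fourthMomentMatrix ℙ (fun ω i => z i ω) B =
      B.trace • 1 + B + Bᵀ + diagonal fun a => κ a * B a a := by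
  ext k l
  rw [fourthMomentMatrix_apply fun a b c d =>
    (hL4 a).integrable_mul_mul_mul (hL4 b) (hL4 c) (hL4 d)]
  simp only [hindep.integral_mul_mul_mul (fun i => (hL4 i).aemeasurable) hmean hvar hκ]
  simp [mul_add, Finset.sum_add_distrib, ite_and, trace, one_apply, diagonal_apply, mul_comm]

end Independent

lemma ProbabilityTheory.iIndepFun.cumulantMatrix_eq {Ω : Type*} [MeasureSpace Ω] {p : ℕ}
    {z : Fin p → Ω → ℝ} {κ : Fin p → ℝ}
    (hindep : iIndepFun z ℙ) (hL4 : ∀ i, MemLp (z i) 4 ℙ) (hmean : ∀ i, ∫ ω, z i ω = 0)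
    (hvar : ∀ i, ∫ ω, z i ω ^ 2 = 1) (hκ : ∀ i, κ i = (∫ ω, z i ω ^ 4) - 3)
    (B : Matrix (Fin p) (Fin p) ℝ) :
    cumulantMatrix (fun ω i => z i ω) B = diagonal fun a => κ a * B a a := by
  rw [cumulantMatrix_eq_fourthMomentMatrix, hindep.fourthMomentMatrix_eq hL4 hmean hvar hκ]
  abel

section OrthogonalMatrix

variable {n : Type*} [Fintype n] [DecidableEq n]

lemma Matrix.mul_single_one_mul_transpose_apply_self (U : Matrix n n ℝ) (i j a : n) :
    (U * single i j (1 : ℝ) * Uᵀ) a a = U a i * U a j := by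
  simp [mul_apply, single, ite_and, Finset.sum_ite_eq]

lemma Matrix.mul_diagonal_mul_transpose_apply_self (W : Matrix n n ℝ) (t : n → ℝ) (k : n) :
    (W * diagonal t * Wᵀ) k k = ∑ a, W k a ^ 2 * t a := by
  rw [mul_apply]
  simp only [mul_diagonal, transpose_apply]
  exact Finset.sum_congr rfl fun a _ => by ring

omit [DecidableEq n] in
lemma Matrix.sum_sq_eq_trace_mul_transpose (M : Matrix n n ℝ) :
    ∑ i, ∑ j, M i j ^ 2 = (M * Mᵀ).trace := by
  simp [trace, mul_apply, sq]

lemma Matrix.sum_sq_transpose_mul_diagonal_mul {U : Matrix n n ℝ} (hU : U * Uᵀ = 1)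
    (s : n → ℝ) : ∑ i, ∑ j, (Uᵀ * diagonal s * U) i j ^ 2 = ∑ a, s a ^ 2 := by
  have hsymm : (Uᵀ * diagonal s * U)ᵀ = Uᵀ * diagonal s * U := by
    simp [transpose_mul, Matrix.mul_assoc]
  have hsq : Uᵀ * diagonal s * U * (Uᵀ * diagonal s * U) = Uᵀ * (diagonal s * diagonal s) * U := by
    simp only [Matrix.mul_assoc]
    rw [← Matrix.mul_assoc U Uᵀ, hU, Matrix.one_mul]
  rw [sum_sq_eq_trace_mul_transpose, hsymm, hsq, trace_mul_comm, ← Matrix.mul_assoc, hU,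
    Matrix.one_mul, diagonal_mul_diagonal, trace_diagonal]
  simp only [sq]

lemma Matrix.sum_pow_four_le_one {W : Matrix n n ℝ} (hW : W * Wᵀ = 1) (a : n) :
    ∑ k, W k a ^ 4 ≤ 1 := by
  have hWW : Wᵀ * W = 1 := mul_eq_one_comm.mp hW
  have hcol : ∑ k, W k a ^ 2 = 1 := by
    simpa [mul_apply, sq] using congrFun (congrFun hWW a) a
  calc ∑ k, W k a ^ 4 = ∑ k, (W k a ^ 2) ^ 2 := by simp only [← pow_mul]
    _ ≤ (∑ k, W k a ^ 2) ^ 2 := Finset.sum_sq_le_sq_sum_of_nonneg fun k _ => sq_nonneg _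
    _ = 1 := by rw [hcol, one_pow]

lemma Matrix.sum_sum_pow_four_mul_sq_le {W : Matrix n n ℝ} (hW : W * Wᵀ = 1) (κ : n → ℝ) :
    ∑ k, ∑ a, W k a ^ 4 * κ a ^ 2 ≤ ∑ a, κ a ^ 2 := by
  rw [Finset.sum_comm]
  refine Finset.sum_le_sum fun a _ => ?_
  rw [← Finset.sum_mul]
  exact mul_le_of_le_one_left (sq_nonneg _) (sum_pow_four_le_one hW a)

lemma Matrix.sum_sum_pow_four_mul_sq_of_signedPerm {P : Matrix n n ℝ} (σ : Equiv.Perm n)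
    {s : n → ℝ} (hs : ∀ k, s k = 1 ∨ s k = -1) (hP : ∀ k l, P k l = if l = σ k then s k else 0)
    (κ : n → ℝ) : ∑ k, ∑ a, P k a ^ 4 * κ a ^ 2 = ∑ a, κ a ^ 2 := by
  have hs4 (k : n) : s k ^ 4 = 1 := by rcases hs k with h | h <;> norm_num [h]
  simp only [hP, ite_pow, ite_mul, hs4, one_mul, ne_eq, OfNat.ofNat_ne_zero, not_false_eq_true,
    zero_pow, zero_mul, Finset.sum_ite_eq', Finset.mem_univ, if_true]
  exact Equiv.sum_comp σ fun a => κ a ^ 2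

/-- With `C = C(x, ·)`, `C (single i j 1)` is the paper's `C^{ij}`. -/
def jadeCriterion (C : Matrix n n ℝ → Matrix n n ℝ) (V : Matrix n n ℝ) : ℝ :=
  ∑ i, ∑ j, ∑ k, (V * C (single i j 1) * Vᵀ) k k ^ 2

lemma jadeCriterion_eq_sum_pow_four {C : Matrix n n ℝ → Matrix n n ℝ} {U : Matrix n n ℝ}
    (hU : U * Uᵀ = 1) {κ : n → ℝ}
    (hC : ∀ A, C A = Uᵀ * diagonal (fun a => κ a * (U * A * Uᵀ) a a) * U) (V : Matrix n n ℝ) :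
    jadeCriterion C V = ∑ k, ∑ a, (V * Uᵀ) k a ^ 4 * κ a ^ 2 := by
  have hentry (i j k : n) : (V * C (single i j 1) * Vᵀ) k k =
      (Uᵀ * diagonal (fun a => (V * Uᵀ) k a ^ 2 * κ a) * U) i j := by
    have hassoc (t : n → ℝ) : V * (Uᵀ * diagonal t * U) * Vᵀ = V * Uᵀ * diagonal t * (V * Uᵀ)ᵀ := by
      simp only [transpose_mul, transpose_transpose, Matrix.mul_assoc]
    rw [hC, hassoc, mul_diagonal_mul_transpose_apply_self, mul_apply]
    simp only [mul_diagonal, transpose_apply, mul_single_one_mul_transpose_apply_self]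
    exact Finset.sum_congr rfl fun a _ => by ring
  simp only [jadeCriterion, hentry]
  rw [Finset.sum_congr rfl fun i _ => Finset.sum_comm, Finset.sum_comm]
  refine Finset.sum_congr rfl fun k _ => ?_
  rw [sum_sq_transpose_mul_diagonal_mul hU]
  exact Finset.sum_congr rfl fun a _ => by ring

end OrthogonalMatrix

theorem jade_criterion_maximized_by_signed_permutation_general
    {Ω : Type*} [MeasureSpace Ω]
    {p : ℕ} (z : Fin p → Ω → ℝ) (κ : Fin p → ℝ)
    (hindep : iIndepFun z ℙ)
    (hL4 : ∀ i, MemLp (z i) 4 ℙ)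
    (hmean : ∀ i, ∫ ω, z i ω = 0)
    (hvar : ∀ i, ∫ ω, (z i ω) ^ 2 = 1)
    (hκ : ∀ i, κ i = (∫ ω, (z i ω) ^ 4) - 3)
    (U : Matrix (Fin p) (Fin p) ℝ) (hU : U * Uᵀ = 1)
    (xst : Ω → Fin p → ℝ) (hxst : ∀ ω, xst ω = Uᵀ.mulVec fun i => z i ω)
    (D : Matrix (Fin p) (Fin p) ℝ → ℝ)
    (hD : ∀ V, D V = ∑ i, ∑ j, ∑ k,
        ((V * cumulantMatrix xst (Matrix.single i j 1) * Vᵀ) k k) ^ 2) :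
    (∀ V : Matrix (Fin p) (Fin p) ℝ, V * Vᵀ = 1 → D V ≤ ∑ l, (κ l) ^ 2) ∧
      (∀ (σ : Equiv.Perm (Fin p)) (s : Fin p → ℝ), (∀ k, s k = 1 ∨ s k = -1) →
        ∀ PJ : Matrix (Fin p) (Fin p) ℝ,
          (∀ k l, PJ k l = if l = σ k then s k else 0) →
          D (PJ * U) = ∑ l, (κ l) ^ 2) := by
  have hUtU : Uᵀ * U = 1 := mul_eq_one_comm.mp hU
  have hC (A : Matrix (Fin p) (Fin p) ℝ) :
      cumulantMatrix xst A = Uᵀ * diagonal (fun a => κ a * (U * A * Uᵀ) a a) * U := by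
    rw [show xst = fun ω => Uᵀ *ᵥ fun i => z i ω from funext hxst,
      cumulantMatrix_mulVec (by rwa [transpose_transpose])
        fun a b c d => (hL4 a).integrable_mul_mul_mul (hL4 b) (hL4 c) (hL4 d),
      hindep.cumulantMatrix_eq hL4 hmean hvar hκ, transpose_transpose]
  have hDV (V : Matrix (Fin p) (Fin p) ℝ) : D V = ∑ k, ∑ a, (V * Uᵀ) k a ^ 4 * κ a ^ 2 :=
    (hD V).trans (jadeCriterion_eq_sum_pow_four hU hC V)
  refine ⟨fun V hV => ?_, fun σ s hs PJ hPJ => ?_⟩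
  · have hW : V * Uᵀ * (V * Uᵀ)ᵀ = 1 := by
      rw [transpose_mul, transpose_transpose, Matrix.mul_assoc, ← Matrix.mul_assoc Uᵀ, hUtU,
        Matrix.one_mul, hV]
    rw [hDV]
    exact sum_sum_pow_four_mul_sq_le hW κ
  · rw [hDV, Matrix.mul_assoc, hU, Matrix.mul_one]
    exact sum_sum_pow_four_mul_sq_of_signedPerm σ hs hPJ κ

/-- The JADE criterion over orthogonal matrices `V` is bounded by `∑ l κ_l^2` and
attains this maximum at `V = P J U` for any permutation matrix `P` and sign-change
matrix `J`. -/
theorem jade_criterion_maximized_by_signed_permutation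
    {Ω : Type*} [MeasureSpace Ω] [IsProbabilityMeasure (ℙ : Measure Ω)]
    {p : ℕ} (z : Fin p → Ω → ℝ) (κ : Fin p → ℝ)
    (hmeas : ∀ i, Measurable (z i))
    (hindep : iIndepFun z ℙ)
    (hL4 : ∀ i, MemLp (z i) 4 ℙ)
    (hmean : ∀ i, ∫ ω, z i ω = 0)
    (hvar : ∀ i, ∫ ω, (z i ω) ^ 2 = 1)
    (hκ : ∀ i, κ i = (∫ ω, (z i ω) ^ 4) - 3)
    (U : Matrix (Fin p) (Fin p) ℝ) (hU : U * Uᵀ = 1)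
    (xst : Ω → Fin p → ℝ) (hxst : ∀ ω, xst ω = Uᵀ.mulVec fun i => z i ω)
    (D : Matrix (Fin p) (Fin p) ℝ → ℝ)
    (hD : ∀ V, D V = ∑ i, ∑ j, ∑ k,
        ((V * cumulantMatrix xst (Matrix.single i j 1) * Vᵀ) k k) ^ 2) :
    (∀ V : Matrix (Fin p) (Fin p) ℝ, V * Vᵀ = 1 → D V ≤ ∑ l, (κ l) ^ 2) ∧
      (∀ (σ : Equiv.Perm (Fin p)) (s : Fin p → ℝ), (∀ k, s k = 1 ∨ s k = -1) →
        ∀ PJ : Matrix (Fin p) (Fin p) ℝ,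
          (∀ k l, PJ k l = if l = σ k then s k else 0) →
          D (PJ * U) = ∑ l, (κ l) ^ 2) :=
  jade_criterion_maximized_by_signed_permutation_general z κ hindep hL4 hmean hvar hκ U hU xst hxst
    D hD
end
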